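/- In the saddle-point setting, ‖H1 F⁻¹ Bᵀ H2⁻¹ B − Bᵀ H2⁻¹ B F⁻ᵀ H1‖_{H1,H1⁻¹} ≤ 2 C₁² η, where F⁻ᵀ denotes the transpose of F⁻¹. -/

import Mathlib

open Matrix

/-- The `H`-norm of a vector: `‖u‖_H = (uᵀ H u)^{1/2}`. -/
noncomputable def vnorm {α : Type*} [Fintype α] (H : Matrix α α ℝ) (u : α → ℝ) : ℝ :=
  Real.sqrt (u ⬝ᵥ (H *ᵥ u))

/-- The weighted operator norm `‖M‖_{H1,H2} = sup_{v ≠ 0} ‖M v‖_{H2} / ‖v‖_{H1}`.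
For a square matrix, `‖M‖_H = wnorm H H M`; the spectral norm is `wnorm 1 1 M`. -/
noncomputable def wnorm {α β : Type*} [Fintype α] [Fintype β]
    (H1 : Matrix α α ℝ) (H2 : Matrix β β ℝ) (M : Matrix β α ℝ) : ℝ :=
  sSup {r : ℝ | ∃ v : α → ℝ, v ≠ 0 ∧ r = vnorm H2 (M *ᵥ v) / vnorm H1 v}

/-!
Write `F = H1 + N` with `N` skew, so that `H1 F⁻¹ = 1 - N F⁻¹` and `F⁻ᵀ H1 = 1 + F⁻ᵀ N`; with
`K = Bᵀ H2⁻¹ B` the operator becomes `-(N F⁻¹ K + K F⁻ᵀ N)`. In each summand `N` costs `η`, `K`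
costs `C₁²` (the adjoint `Bᵀ` has the same dual norm as `B`), and `F⁻¹`, `F⁻ᵀ` cost at most `1`
from `‖·‖_{H1⁻¹}` to `‖·‖_{H1}`: since `yᵀ F y = ‖y‖²_{H1}`, Cauchy–Schwarz gives
`‖y‖²_{H1} ≤ ‖y‖_{H1} ‖F y‖_{H1⁻¹}`.
-/

section
variable {α β : Type*} [Fintype α] [Fintype β]

theorem Matrix.PosSemidef.exists_eq_transpose_mul_self {H : Matrix α α ℝ} (hH : H.PosSemidef) :
    ∃ A : Matrix α α ℝ, H = Aᵀ * A := by
  classical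
  open scoped MatrixOrder in
  obtain ⟨A, rfl⟩ := CStarAlgebra.nonneg_iff_eq_star_mul_self.mp hH.nonneg
  exact ⟨A, by rw [star_eq_conjTranspose, conjTranspose_eq_transpose_of_trivial]⟩

theorem Matrix.PosDef.exists_eq_transpose_mul_self [DecidableEq α] {H : Matrix α α ℝ}
    (hH : H.PosDef) : ∃ A : Matrix α α ℝ, IsUnit A.det ∧ H = Aᵀ * A := by
  obtain ⟨A, rfl⟩ := hH.posSemidef.exists_eq_transpose_mul_self
  refine ⟨A, isUnit_iff_ne_zero.2 fun hA => ?_, rfl⟩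
  have := hH.det_pos
  rw [det_mul, det_transpose, hA, mul_zero] at this
  exact this.false

theorem vnorm_eq_norm_toLp {H : Matrix α α ℝ} {A : Matrix β α ℝ} (hA : H = Aᵀ * A) (u : α → ℝ) :
    vnorm H u = ‖WithLp.toLp 2 (A *ᵥ u)‖ := by
  rw [vnorm, EuclideanSpace.norm_eq, hA, ← mulVec_mulVec, dotProduct_transpose_mulVec,
    dotProduct]
  simp only [Real.norm_eq_abs, sq, abs_mul_abs_self]
end

section
variable {α : Type*} [Fintype α] {H : Matrix α α ℝ}

theorem vnorm_sq (hH : H.PosSemidef) (u : α → ℝ) : vnorm H u ^ 2 = u ⬝ᵥ (H *ᵥ u) :=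
  Real.sq_sqrt (hH.dotProduct_mulVec_nonneg u)

theorem vnorm_nonneg (H : Matrix α α ℝ) (u : α → ℝ) : 0 ≤ vnorm H u :=
  Real.sqrt_nonneg _

theorem vnorm_pos (hH : H.PosDef) {u : α → ℝ} (hu : u ≠ 0) : 0 < vnorm H u :=
  Real.sqrt_pos.2 (by simpa using hH.dotProduct_mulVec_pos hu)

theorem vnorm_neg (u : α → ℝ) : vnorm H (-u) = vnorm H u := by
  simp [vnorm, mulVec_neg]

theorem vnorm_add_le (hH : H.PosSemidef) (u v : α → ℝ) :
    vnorm H (u + v) ≤ vnorm H u + vnorm H v := by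
  obtain ⟨A, hA⟩ := hH.exists_eq_transpose_mul_self
  simp only [vnorm_eq_norm_toLp hA, mulVec_add, WithLp.toLp_add]
  exact norm_add_le _ _

theorem dotProduct_mulVec_le_vnorm_mul_vnorm (hH : H.PosSemidef) (u v : α → ℝ) :
    u ⬝ᵥ (H *ᵥ v) ≤ vnorm H u * vnorm H v := by
  obtain ⟨A, hA⟩ := hH.exists_eq_transpose_mul_self
  rw [vnorm_eq_norm_toLp hA, vnorm_eq_norm_toLp hA, hA, ← mulVec_mulVec,
    dotProduct_transpose_mulVec]
  simpa only [EuclideanSpace.inner_toLp_toLp, star_trivial] using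
    real_inner_le_norm (WithLp.toLp 2 (A *ᵥ u)) (WithLp.toLp 2 (A *ᵥ v))

variable [DecidableEq α]

theorem vnorm_nonsing_inv_mulVec (hH : H.PosDef) (v : α → ℝ) :
    vnorm H (H⁻¹ *ᵥ v) = vnorm H⁻¹ v := by
  rw [vnorm, vnorm, mulVec_mulVec, mul_nonsing_inv _ hH.det_pos.ne'.isUnit, one_mulVec,
    dotProduct_comm]

theorem dotProduct_le_vnorm_mul_vnorm_inv (hH : H.PosDef) (u v : α → ℝ) :
    u ⬝ᵥ v ≤ vnorm H u * vnorm H⁻¹ v := by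
  simpa only [mulVec_mulVec, mul_nonsing_inv _ hH.det_pos.ne'.isUnit, one_mulVec,
    vnorm_nonsing_inv_mulVec hH] using
    dotProduct_mulVec_le_vnorm_mul_vnorm hH.posSemidef u (H⁻¹ *ᵥ v)

theorem vnorm_le_vnorm_inv_mulVec (hH : H.PosDef) {G : Matrix α α ℝ}
    (hG : ∀ y, y ⬝ᵥ (G *ᵥ y) = y ⬝ᵥ (H *ᵥ y)) (y : α → ℝ) :
    vnorm H y ≤ vnorm H⁻¹ (G *ᵥ y) := by
  have key : vnorm H y ^ 2 ≤ vnorm H y * vnorm H⁻¹ (G *ᵥ y) := by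
    rw [vnorm_sq hH.posSemidef, ← hG]
    exact dotProduct_le_vnorm_mul_vnorm_inv hH _ _
  nlinarith [vnorm_nonneg H y, vnorm_nonneg H⁻¹ (G *ᵥ y)]

theorem isUnit_det_of_dotProduct_mulVec_eq (hH : H.PosDef) {G : Matrix α α ℝ}
    (hG : ∀ y, y ⬝ᵥ (G *ᵥ y) = y ⬝ᵥ (H *ᵥ y)) : IsUnit G.det := by
  rw [← isUnit_iff_isUnit_det, ← mulVec_injective_iff_isUnit]
  intro y z hyz
  by_contra hne
  have hpos := hH.dotProduct_mulVec_pos (sub_ne_zero.2 hne)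
  rw [star_trivial, ← hG, mulVec_sub, hyz, sub_self, dotProduct_zero] at hpos
  exact hpos.false

theorem vnorm_nonsing_inv_mulVec_le (hH : H.PosDef) {G : Matrix α α ℝ}
    (hG : ∀ y, y ⬝ᵥ (G *ᵥ y) = y ⬝ᵥ (H *ᵥ y)) (x : α → ℝ) :
    vnorm H (G⁻¹ *ᵥ x) ≤ vnorm H⁻¹ x := by
  simpa only [mulVec_mulVec, mul_nonsing_inv _ (isUnit_det_of_dotProduct_mulVec_eq hH hG),
    one_mulVec] using vnorm_le_vnorm_inv_mulVec hH hG (G⁻¹ *ᵥ x)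

theorem vnorm_inv_mul_nonsing_inv_mul_mulVec_le (hH : H.PosDef) {G P Q : Matrix α α ℝ}
    (hG : ∀ y, y ⬝ᵥ (G *ᵥ y) = y ⬝ᵥ (H *ᵥ y)) {a b : ℝ} (ha : 0 ≤ a)
    (hP : ∀ v, vnorm H⁻¹ (P *ᵥ v) ≤ a * vnorm H v)
    (hQ : ∀ v, vnorm H⁻¹ (Q *ᵥ v) ≤ b * vnorm H v) (v : α → ℝ) :
    vnorm H⁻¹ ((P * G⁻¹ * Q) *ᵥ v) ≤ a * b * vnorm H v :=
  calc vnorm H⁻¹ ((P * G⁻¹ * Q) *ᵥ v) = vnorm H⁻¹ (P *ᵥ G⁻¹ *ᵥ Q *ᵥ v) := by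
        rw [mulVec_mulVec, mulVec_mulVec]
    _ ≤ a * vnorm H⁻¹ (Q *ᵥ v) := by
        refine (hP _).trans ?_
        gcongr
        exact vnorm_nonsing_inv_mulVec_le hH hG _
    _ ≤ a * b * vnorm H v := by rw [mul_assoc]; gcongr; exact hQ v
end

section
variable {α β : Type*} [Fintype α] [Fintype β] [DecidableEq α] [DecidableEq β]
  {H : Matrix α α ℝ} {K : Matrix β β ℝ} {B : Matrix β α ℝ} {C : ℝ}

theorem vnorm_inv_transpose_mulVec_le (hH : H.PosDef) (hK : K.PosDef) (hC : 0 ≤ C)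
    (hB : ∀ v, vnorm K (B *ᵥ v) ≤ C * vnorm H v) (x : β → ℝ) :
    vnorm H⁻¹ (Bᵀ *ᵥ x) ≤ C * vnorm K⁻¹ x := by
  set w := H⁻¹ *ᵥ (Bᵀ *ᵥ x)
  have key : vnorm H⁻¹ (Bᵀ *ᵥ x) ^ 2 ≤ vnorm H⁻¹ (Bᵀ *ᵥ x) * (C * vnorm K⁻¹ x) :=
    calc vnorm H⁻¹ (Bᵀ *ᵥ x) ^ 2 = B *ᵥ w ⬝ᵥ x := by
          rw [vnorm_sq hH.inv.posSemidef, dotProduct_comm, dotProduct_transpose_mulVec,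
            dotProduct_comm]
      _ ≤ vnorm K (B *ᵥ w) * vnorm K⁻¹ x := dotProduct_le_vnorm_mul_vnorm_inv hK _ _
      _ ≤ C * vnorm H w * vnorm K⁻¹ x := by gcongr; exacts [vnorm_nonneg _ _, hB w]
      _ = vnorm H⁻¹ (Bᵀ *ᵥ x) * (C * vnorm K⁻¹ x) := by
          rw [vnorm_nonsing_inv_mulVec hH]; ring
  nlinarith [vnorm_nonneg H⁻¹ (Bᵀ *ᵥ x), mul_nonneg hC (vnorm_nonneg K⁻¹ x)]

theorem vnorm_inv_transpose_mul_inv_mul_mulVec_le (hH : H.PosDef) (hK : K.PosDef) (hC : 0 ≤ C)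
    (hB : ∀ v, vnorm K⁻¹ (B *ᵥ v) ≤ C * vnorm H v) (v : α → ℝ) :
    vnorm H⁻¹ ((Bᵀ * K⁻¹ * B) *ᵥ v) ≤ C ^ 2 * vnorm H v :=
  calc vnorm H⁻¹ ((Bᵀ * K⁻¹ * B) *ᵥ v) = vnorm H⁻¹ (Bᵀ *ᵥ (K⁻¹ *ᵥ (B *ᵥ v))) := by
        rw [mulVec_mulVec, mulVec_mulVec]
    _ ≤ C * vnorm K⁻¹⁻¹ (K⁻¹ *ᵥ (B *ᵥ v)) := vnorm_inv_transpose_mulVec_le hH hK.inv hC hB _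
    _ = C * vnorm K⁻¹ (B *ᵥ v) := by
        rw [nonsing_inv_nonsing_inv _ hK.det_pos.ne'.isUnit,
          vnorm_nonsing_inv_mulVec hK]
    _ ≤ C ^ 2 * vnorm H v := by rw [sq, mul_assoc]; gcongr; exact hB v
end

section
variable {α β : Type*} [Fintype α] [Fintype β] {H1 : Matrix α α ℝ} {H2 : Matrix β β ℝ}
  {M : Matrix β α ℝ} {c : ℝ}

theorem wnorm_nonneg (H1 : Matrix α α ℝ) (H2 : Matrix β β ℝ) (M : Matrix β α ℝ) :
    0 ≤ wnorm H1 H2 M := by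
  refine Real.sSup_nonneg fun r ⟨v, _, hr⟩ => ?_
  rw [hr]
  exact div_nonneg (vnorm_nonneg _ _) (vnorm_nonneg _ _)

theorem wnorm_le_of_forall (hc : 0 ≤ c) (h : ∀ v, vnorm H2 (M *ᵥ v) ≤ c * vnorm H1 v) :
    wnorm H1 H2 M ≤ c := by
  refine Real.sSup_le (fun r ⟨v, _, hr⟩ => ?_) hc
  rw [hr]
  exact div_le_of_le_mul₀ (vnorm_nonneg _ _) hc (h v)

variable [DecidableEq α]

open scoped Matrix.Norms.L2Operator in
theorem exists_vnorm_mulVec_le (hH1 : H1.PosDef) (hH2 : H2.PosSemidef) (M : Matrix β α ℝ) :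
    ∃ K, ∀ v, vnorm H2 (M *ᵥ v) ≤ K * vnorm H1 v := by
  obtain ⟨A1, hA1, rfl⟩ := hH1.exists_eq_transpose_mul_self
  obtain ⟨A2, rfl⟩ := hH2.exists_eq_transpose_mul_self
  refine ⟨‖A2 * M * A1⁻¹‖, fun v => ?_⟩
  have h := l2_opNorm_mulVec (A2 * M * A1⁻¹) (WithLp.toLp 2 (A1 *ᵥ v))
  rw [vnorm_eq_norm_toLp rfl, vnorm_eq_norm_toLp rfl]
  convert h using 3
  simp [mulVec_mulVec, Matrix.mul_assoc, nonsing_inv_mul _ hA1]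

theorem vnorm_mulVec_le_of_wnorm_le (hH1 : H1.PosDef) (hH2 : H2.PosSemidef)
    (h : wnorm H1 H2 M ≤ c) (v : α → ℝ) : vnorm H2 (M *ᵥ v) ≤ c * vnorm H1 v := by
  rcases eq_or_ne v 0 with rfl | hv
  · simp [vnorm]
  -- `sSup` of a set that is not bounded above is `0`, so the a priori bound is needed.
  obtain ⟨K, hK⟩ := exists_vnorm_mulVec_le hH1 hH2 M
  have hbdd : BddAbove {r | ∃ v, v ≠ 0 ∧ r = vnorm H2 (M *ᵥ v) / vnorm H1 v} := by
    refine ⟨K, fun r ⟨w, hw, hr⟩ => ?_⟩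
    rw [hr, div_le_iff₀ (vnorm_pos hH1 hw)]
    exact hK w
  rw [← div_le_iff₀ (vnorm_pos hH1 hv)]
  exact (le_csSup hbdd ⟨v, hv, rfl⟩).trans h
end

theorem dotProduct_mulVec_half_smul_add_transpose {α : Type*} [Fintype α] (F : Matrix α α ℝ)
    (y : α → ℝ) : y ⬝ᵥ (((1 : ℝ) / 2) • (F + Fᵀ)) *ᵥ y = y ⬝ᵥ F *ᵥ y := by
  rw [smul_mulVec, add_mulVec, dotProduct_smul, dotProduct_add, dotProduct_transpose_mulVec,
    smul_eq_mul]
  ring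

theorem mul_mul_sub_mul_mul_eq_neg_add {R : Type*} [Ring R] {h n f f' g g' : R}
    (hf : h + n = f) (hg : h - n = g) (hff' : f * f' = 1) (hg'g : g' * g = 1) (k : R) :
    h * f' * k - k * g' * h = -(n * f' * k + k * g' * n) := by
  have h_mul_f' : h * f' = 1 - n * f' := by
    rw [← hff', ← sub_mul, ← hf, add_sub_cancel_right]
  have g'_mul_h : g' * h = 1 + g' * n := by
    rw [← hg'g, ← mul_add, ← hg, sub_add_cancel]
  rw [h_mul_f', mul_assoc k, g'_mul_h]
  noncomm_ring

theorem stmt_9_general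
    {n m : ℕ} (F : Matrix (Fin n) (Fin n) ℝ) (B : Matrix (Fin m) (Fin n) ℝ)
    (H1 N : Matrix (Fin n) (Fin n) ℝ) (H2 : Matrix (Fin m) (Fin m) ℝ)
    (η C₁ : ℝ)
    (hH1 : H1 = ((1 : ℝ)/2) • (F + Fᵀ)) (hN : N = ((1 : ℝ)/2) • (F - Fᵀ))
    (hH1pd : H1.PosDef) (hH2pd : H2.PosDef)
    (hNnorm : wnorm H1 H1⁻¹ N ≤ η)
    (hBnorm : wnorm H1 H2⁻¹ B ≤ C₁) :
    wnorm H1 H1⁻¹ (H1 * F⁻¹ * Bᵀ * H2⁻¹ * B - Bᵀ * H2⁻¹ * B * (F⁻¹)ᵀ * H1) ≤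
      2 * C₁ ^ 2 * η := by
  have hF : ∀ y, y ⬝ᵥ F *ᵥ y = y ⬝ᵥ H1 *ᵥ y := fun y => by
    rw [hH1, dotProduct_mulVec_half_smul_add_transpose]
  have hFt : ∀ y, y ⬝ᵥ Fᵀ *ᵥ y = y ⬝ᵥ H1 *ᵥ y := fun y => by
    rw [dotProduct_transpose_mulVec, hF]
  have hFdet : IsUnit F.det := isUnit_det_of_dotProduct_mulVec_eq hH1pd hF
  have hη : 0 ≤ η := (wnorm_nonneg _ _ _).trans hNnorm
  have hC₁ : 0 ≤ C₁ := (wnorm_nonneg _ _ _).trans hBnorm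
  have hNv := vnorm_mulVec_le_of_wnorm_le hH1pd hH1pd.inv.posSemidef hNnorm
  have hBv := vnorm_mulVec_le_of_wnorm_le hH1pd hH2pd.inv.posSemidef hBnorm
  have hKv := vnorm_inv_transpose_mul_inv_mul_mulVec_le hH1pd hH2pd hC₁ hBv
  have hid : H1 * F⁻¹ * Bᵀ * H2⁻¹ * B - Bᵀ * H2⁻¹ * B * (F⁻¹)ᵀ * H1 =
      -(N * F⁻¹ * (Bᵀ * H2⁻¹ * B) + Bᵀ * H2⁻¹ * B * (F⁻¹)ᵀ * N) := by
    have hsum : H1 + N = F := by rw [hH1, hN]; module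
    have hdiff : H1 - N = Fᵀ := by rw [hH1, hN]; module
    simpa only [Matrix.mul_assoc] using mul_mul_sub_mul_mul_eq_neg_add hsum hdiff
      (mul_nonsing_inv F hFdet)
      (by rw [← transpose_mul, mul_nonsing_inv F hFdet, transpose_one]) (Bᵀ * H2⁻¹ * B)
  refine wnorm_le_of_forall (by positivity) fun v => ?_
  rw [hid, neg_mulVec, vnorm_neg, add_mulVec]
  calc _ ≤ _ := vnorm_add_le hH1pd.inv.posSemidef _ _
    _ ≤ η * C₁ ^ 2 * vnorm H1 v + C₁ ^ 2 * η * vnorm H1 v := by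
        gcongr
        · exact vnorm_inv_mul_nonsing_inv_mul_mulVec_le hH1pd hF hη hNv hKv v
        · rw [transpose_nonsing_inv]
          exact vnorm_inv_mul_nonsing_inv_mul_mulVec_le hH1pd hFt (sq_nonneg _) hKv hNv v
    _ = 2 * C₁ ^ 2 * η * vnorm H1 v := by ring

theorem stmt_9
    {n m : ℕ} (F : Matrix (Fin n) (Fin n) ℝ) (B : Matrix (Fin m) (Fin n) ℝ)
    (H1 N : Matrix (Fin n) (Fin n) ℝ) (H2 : Matrix (Fin m) (Fin m) ℝ)
    (η C₁ C₂ : ℝ) (hη : 0 < η) (hC1 : 0 < C₁) (hC2 : 0 < C₂)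
    (hH1 : H1 = ((1 : ℝ)/2) • (F + Fᵀ)) (hN : N = ((1 : ℝ)/2) • (F - Fᵀ))
    (hH1pd : H1.PosDef) (hH2pd : H2.PosDef)
    (hBrank : B.rank = m)
    (hNnorm : wnorm H1 H1⁻¹ N ≤ η)
    (hBnorm : wnorm H1 H2⁻¹ B ≤ C₁)
    (hinfsup : ∀ x : Fin m → ℝ, x ≠ 0 → C₂ * vnorm H2 x ≤ vnorm H1⁻¹ (Bᵀ *ᵥ x)) :
    wnorm H1 H1⁻¹ (H1 * F⁻¹ * Bᵀ * H2⁻¹ * B - Bᵀ * H2⁻¹ * B * (F⁻¹)ᵀ * H1) ≤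
      2 * C₁ ^ 2 * η :=
  stmt_9_general F B H1 N H2 η C₁ hH1 hN hH1pd hH2pd hNnorm hBnorm
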